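/- The look-up based counterfactual algorithm is stable under straight-line partial fulfillment in the ℓ1 metric when candidates lie in the same quadrant: let S ⊆ ℝ^D be finite and nonempty, let x* ∈ S minimize ‖x - ·‖₁ over S, and let w = (1-u)·x + u·x* with u ∈ [0,1]. Then for any x' ∈ S such that, for each coordinate d, w_d lies (weakly) between x_d and x'_d, we have ‖w - x*‖₁ ≤ ‖w - x'‖₁. -/
import Mathlib

lemma betw_abs (a b c : ℝ) (h1 : min a b ≤ c) (h2 : c ≤ max a b) :
    |a - b| = |a - c| + |c - b| := by
  rcases le_total a b with h | h
  · rw [min_eq_left h] at h1; rw [max_eq_right h] at h2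
    rw [abs_of_nonpos (by linarith), abs_of_nonpos (by linarith),
      abs_of_nonpos (by linarith)]; ring
  · rw [min_eq_right h] at h1; rw [max_eq_left h] at h2
    rw [abs_of_nonneg (by linarith), abs_of_nonneg (by linarith),
      abs_of_nonneg (by linarith)]; ring

open Finset in
/-- Look-up based CF is stable under straight-line partial fulfillment (same-quadrant case). -/
theorem stmt_6 (D : ℕ) (S : Finset (Fin D → ℝ)) (hS : S.Nonempty) (x : Fin D → ℝ)
    (xstar : Fin D → ℝ) (hstar : xstar ∈ S)
    (hmin : ∀ s ∈ S, ∑ d, |x d - xstar d| ≤ ∑ d, |x d - s d|)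
    (u : ℝ) (hu0 : 0 ≤ u) (hu1 : u ≤ 1)
    (w : Fin D → ℝ) (hw : w = fun d => (1 - u) * x d + u * xstar d)
    (x' : Fin D → ℝ) (hx' : x' ∈ S)
    (hbtw : ∀ d, min (x d) (x' d) ≤ w d ∧ w d ≤ max (x d) (x' d)) :
    ∑ d, |w d - xstar d| ≤ ∑ d, |w d - x' d| := by
  have hb2 : ∀ d, min (x d) (xstar d) ≤ w d ∧ w d ≤ max (x d) (xstar d) := by
    intro d
    subst hw
    simp only
    rcases le_total (x d) (xstar d) with h | h
    · rw [min_eq_left h, max_eq_right h]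
      constructor <;> nlinarith
    · rw [min_eq_right h, max_eq_left h]
      constructor <;> nlinarith
  have e1 : ∑ d, |x d - xstar d| = ∑ d, |x d - w d| + ∑ d, |w d - xstar d| := by
    rw [← Finset.sum_add_distrib]
    exact Finset.sum_congr rfl fun d _ => betw_abs _ _ _ (hb2 d).1 (hb2 d).2
  have e2 : ∑ d, |x d - x' d| = ∑ d, |x d - w d| + ∑ d, |w d - x' d| := by
    rw [← Finset.sum_add_distrib]
    exact Finset.sum_congr rfl fun d _ => betw_abs _ _ _ (hbtw d).1 (hbtw d).2
  have := hmin x' hx'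
  linarith
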